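/- arXiv:2307.02151 — 4 statements merged into one kernel-verified Lean document; each statement's English description precedes it below -/
import Mathlib

section
/- Let u and v be distinct positive words in two letters (i.e. distinct elements of the free monoid on a two-element alphabet), and let ℓ = ℓ(u) + ℓ(v) be the sum of their lengths. For n with n ≥ 2ℓ, if x and y are independent uniformly random elements of the symmetric group S_n, then the probability that u(x,y) = v(x,y) (equivalently, that the evaluation of the word w = u·v⁻¹ at (x,y) is the identity permutation) is at most (2ℓ/n)^⌊n/(2ℓ)⌋. -/
/-!
Evaluate a word at `(x, y)` as a walk: `u(x, y)` sends `z` to the end of the walk from `z` along the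
letters of `u` read from right to left. Cancelling the common beginning of the two walks (a
bijection) leaves two words `U`, `V` with different first letters and `|U| + |V| ≤ ℓ`.

Count pairs by revealing `x` and `y` only where the walks go. Suppose the values at no more than
`n / 2 - ℓ` points have been fixed, and start both walks at a point `p` that is neither in the
domain nor in the range of what is fixed. A step into an unrevealed value is uniform over at least
`n / 2` values, and forced continuations are injective, so the walk along `U` ends at the endpoint
of the walk along `V` with probability at most `|U| / (n / 2)`, unless it is entirely forced. As
the first letters differ, that happens only if the walk along `V` returns to `p`, which has
probability at most `|V| / (n / 2)`. Hence the walks from `p` meet with probability at most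
`2ℓ / n`; conditioning on all values revealed and restarting from a fresh point, this can be
repeated `⌊n / (2ℓ)⌋` times.
-/

open Equiv Nat Finset

theorem Finset.card_filter_eq_sum_card_filter_fiber {β γ : Type*} [DecidableEq γ]
    (s : Finset β) (f : β → γ) (P : β → Prop) [DecidablePred P] :
    #{x ∈ s | P x} = ∑ y ∈ s.image f, #{x ∈ {x ∈ s | f x = y} | P x} := by
  rw [card_eq_sum_card_fiberwise fun x hx => mem_image_of_mem f (mem_filter.1 hx).1]
  simp only [filter_comm]

namespace WordMap

variable {ι α : Type*}

def walk (X : ι → Perm α) : List ι → α → α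
  | [], z => z
  | c :: L, z => walk X L (X c z)

def traj (X : ι → Perm α) : List ι → α → List α
  | [], _ => []
  | c :: L, z => X c z :: traj X L (X c z)

theorem walk_concat (X : ι → Perm α) (c : ι) :
    ∀ (L : List ι) (z : α), walk X (L ++ [c]) z = X c (walk X L z)
  | [], _ => rfl
  | _ :: L, _ => walk_concat X c L _

theorem lift_apply_eq_walk (X : ι → Perm α) (u : FreeMonoid ι) (z : α) :
    FreeMonoid.lift X u z = walk X u.toList.reverse z := by
  rw [FreeMonoid.lift_apply]
  induction u.toList generalizing z with
  | nil => rfl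
  | cons c L ih => rw [List.map_cons, List.prod_cons, Perm.mul_apply, ih, List.reverse_cons,
      walk_concat]

theorem walk_eq_of_traj_eq {X Y : ι → Perm α} :
    ∀ {L : List ι} {z : α}, traj Y L z = traj X L z → walk Y L z = walk X L z
  | [], _, _ => rfl
  | _ :: _, _, h => by
    obtain ⟨h₁, h₂⟩ := List.cons.inj h
    rw [h₁] at h₂
    exact (congrArg _ h₁).trans (walk_eq_of_traj_eq h₂)

theorem walk_mem_traj (X : ι → Perm α) :
    ∀ {L : List ι} (z : α), L ≠ [] → walk X L z ∈ traj X L z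
  | [_], _, _ => List.mem_singleton_self _
  | _ :: _ :: _, _, _ => List.mem_cons_of_mem _ (walk_mem_traj X _ (List.cons_ne_nil _ _))

theorem exists_head?_ne_and_walk_eq_iff :
    ∀ {U V : List ι}, U ≠ V → ∃ t₁ t₂ : List ι, t₁.head? ≠ t₂.head? ∧
      t₁.length + t₂.length ≤ U.length + V.length ∧
      ∀ X : ι → Perm α, (∀ z, walk X U z = walk X V z) ↔ ∀ z, walk X t₁ z = walk X t₂ z
  | [], [], h => absurd rfl h
  | a :: U, b :: V, h => by
    by_cases hab : a = b
    · subst hab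
      obtain ⟨t₁, t₂, hne, hlen, hiff⟩ := exists_head?_ne_and_walk_eq_iff (by simpa using h)
      refine ⟨t₁, t₂, hne, by simp only [List.length_cons]; omega, fun X => ?_⟩
      rw [← hiff]
      exact ((X a).surjective.forall (p := fun z => walk X U z = walk X V z)).symm
    · exact ⟨_, _, by simpa using hab, le_rfl, fun _ => Iff.rfl⟩
  | [], _ :: _, _ => ⟨_, _, by simp, le_rfl, fun _ => Iff.rfl⟩
  | _ :: _, [], _ => ⟨_, _, by simp, le_rfl, fun _ => Iff.rfl⟩

theorem exists_fresh [DecidableEq α] [Fintype α] (D : Finset (ι × α)) (R : ι → Perm α)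
    (h : 2 * #D < Fintype.card α) :
    ∃ p, ∀ x ∈ D, x.2 ≠ p ∧ R x.1 x.2 ≠ p := by
  obtain ⟨p, -, hp⟩ := exists_mem_notMem_of_card_lt_card
    (s := D.image Prod.snd ∪ D.image fun x => R x.1 x.2) (t := univ) <| calc
      _ ≤ #(D.image Prod.snd) + #(D.image fun x => R x.1 x.2) := card_union_le _ _
      _ ≤ #D + #D := _root_.add_le_add card_image_le card_image_le
      _ < #(univ : Finset α) := by rw [Finset.card_univ]; omega
  exact ⟨p, fun x hx => ⟨fun h => hp (mem_union_left _ (mem_image.2 ⟨x, hx, h⟩)),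
    fun h => hp (mem_union_right _ (mem_image.2 ⟨x, hx, h⟩))⟩⟩

variable [DecidableEq ι] [DecidableEq α]

def steps (X : ι → Perm α) : List ι → α → Finset (ι × α)
  | [], _ => ∅
  | c :: L, z => insert (c, z) (steps X L (X c z))

theorem card_steps_le (X : ι → Perm α) : ∀ (L : List ι) (z : α), #(steps X L z) ≤ L.length
  | [], _ => by simp [steps]
  | c :: L, z => (card_insert_le _ _).trans (by simpa using card_steps_le X L (X c z))

theorem snd_mem_of_mem_steps (X : ι → Perm α) :
    ∀ {L : List ι} {z : α} {x : ι × α}, x ∈ steps X L z → x.2 ∈ z :: traj X L z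
  | [], _, _, h => by simp [steps] at h
  | c :: L, z, x, h => by
    rcases mem_insert.1 h with rfl | h
    · exact List.mem_cons_self
    · exact List.mem_cons_of_mem _ (snd_mem_of_mem_steps X h)

theorem forall_steps_iff_traj_eq {X Y : ι → Perm α} :
    ∀ {L : List ι} {z : α},
      (∀ x ∈ steps X L z, Y x.1 x.2 = X x.1 x.2) ↔ traj Y L z = traj X L z
  | [], _ => by simp [steps, traj]
  | c :: L, z => by
    rw [steps, forall_mem_insert, traj, traj, List.cons.injEq]
    exact and_congr_right fun h => h ▸ forall_steps_iff_traj_eq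

variable {D : Finset (ι × α)} {R X Y : ι → Perm α} {c : ι} {z q q₁ q₂ : α}

/-- The endpoint of the walk along `L` from `z`, when each of its steps is already prescribed by
the values of `R` on `D`. -/
def forcedWalk (D : Finset (ι × α)) (R : ι → Perm α) : List ι → α → Option α
  | [], z => some z
  | c :: L, z => if (c, z) ∈ D then forcedWalk D R L (R c z) else none

theorem forcedWalk_of_mem (h : (c, z) ∈ D) (L : List ι) :
    forcedWalk D R (c :: L) z = forcedWalk D R L (R c z) := if_pos h

theorem forcedWalk_of_notMem (h : (c, z) ∉ D) (L : List ι) :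
    forcedWalk D R (c :: L) z = none := if_neg h

theorem eq_of_forcedWalk_eq_some {R₁ R₂ : ι → Perm α}
    (h : ∀ c a b, (c, a) ∈ D → (c, b) ∈ D → R₁ c a = R₂ c b → a = b) :
    ∀ {L : List ι} {z₁ z₂ T : α},
      forcedWalk D R₁ L z₁ = some T → forcedWalk D R₂ L z₂ = some T → z₁ = z₂
  | [], _, _, _, h₁, h₂ => Option.some_injective _ (h₁.trans h₂.symm)
  | c :: _, z₁, z₂, _, h₁, h₂ => by
    by_cases hz₁ : (c, z₁) ∈ D
    · by_cases hz₂ : (c, z₂) ∈ D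
      · rw [forcedWalk_of_mem hz₁] at h₁
        rw [forcedWalk_of_mem hz₂] at h₂
        exact h c _ _ hz₁ hz₂ (eq_of_forcedWalk_eq_some h h₁ h₂)
      · simp [forcedWalk_of_notMem hz₂] at h₂
    · simp [forcedWalk_of_notMem hz₁] at h₁

theorem mem_traj_of_forcedWalk_eq_some {U V : List ι} {p : α} (hp : ∀ x ∈ D, x.2 ≠ p)
    (hne : U.head? ≠ V.head?)
    (h : forcedWalk (D ∪ steps X V p) X U p = some (walk X V p)) : p ∈ traj X V p := by
  cases U with
  | nil =>
    rw [forcedWalk, Option.some_inj] at h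
    have := walk_mem_traj X p fun hV : V = [] => hne (by rw [hV])
    rwa [← h] at this
  | cons a U =>
    by_cases hmem : (a, p) ∈ D ∪ steps X V p
    · rcases mem_union.1 hmem with hD | hS
      · exact absurd rfl (hp _ hD)
      · cases V with
        | nil => simp [steps] at hS
        | cons b V =>
          rcases mem_insert.1 hS with hab | hS
          · simp_all
          · exact snd_mem_of_mem_steps X hS
    · simp [forcedWalk_of_notMem hmem] at h

/-- For a free value `q`, a representative of the fiber `Y c z = q` of `cylinder D R`
(`mem_cylinder_reroute_iff`). -/
def reroute (R : ι → Perm α) (c : ι) (z q : α) : ι → Perm α :=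
  Pi.mulSingle c (swap (R c z) q) * R

theorem reroute_apply_self : reroute R c z q c z = q := by
  simp [reroute]

variable [Fintype α]

def freeValues (D : Finset (ι × α)) (R : ι → Perm α) (c : ι) : Finset α :=
  {q | ∀ a, (c, a) ∈ D → R c a ≠ q}

@[simp]
theorem mem_freeValues :
    q ∈ freeValues D R c ↔ ∀ a, (c, a) ∈ D → R c a ≠ q := by
  simp [freeValues]

theorem card_le_card_add_card_freeValues (D : Finset (ι × α)) (R : ι → Perm α) (c : ι) :
    Fintype.card α ≤ #D + #(freeValues D R c) := by
  have hsub : (freeValues D R c)ᶜ ⊆ D.image fun x => R x.1 x.2 := fun q hq => by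
    simp only [freeValues, mem_compl, mem_filter_univ, not_forall, not_not] at hq
    obtain ⟨a, ha, rfl⟩ := hq
    exact mem_image_of_mem _ ha
  have := (card_le_card hsub).trans card_image_le
  rw [card_compl] at this
  omega

theorem reroute_apply_of_mem (hz : (c, z) ∉ D) (hq : q ∈ freeValues D R c) {x : ι × α}
    (hx : x ∈ D) : reroute R c z q x.1 x.2 = R x.1 x.2 := by
  obtain ⟨d, a⟩ := x
  by_cases hd : d = c
  · subst hd
    have haz : R d a ≠ R d z := fun h => hz ((R d).injective h ▸ hx)
    have haq : R d a ≠ q := (mem_freeValues.1 hq) a hx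
    simp [reroute, swap_apply_of_ne_of_ne haz haq]
  · simp [reroute, Pi.mulSingle_eq_of_ne hd]

theorem reroute_inj (hz : (c, z) ∉ D) (hq₁ : q₁ ∈ freeValues D R c)
    (hq₂ : q₂ ∈ freeValues D R c) (d : ι) (a b : α) (ha : (d, a) ∈ insert (c, z) D)
    (hb : (d, b) ∈ insert (c, z) D) (h : reroute R c z q₁ d a = reroute R c z q₂ d b) : a = b := by
  rw [mem_insert, Prod.mk.injEq] at ha hb
  rcases ha with ⟨rfl, rfl⟩ | ha
  · rcases hb with ⟨-, rfl⟩ | hb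
    · rfl
    · rw [reroute_apply_self, reroute_apply_of_mem hz hq₂ hb] at h
      exact absurd h.symm (mem_freeValues.1 hq₁ b hb)
  · rcases hb with ⟨rfl, rfl⟩ | hb
    · rw [reroute_apply_self, reroute_apply_of_mem hz hq₁ ha] at h
      exact absurd h (mem_freeValues.1 hq₂ a ha)
    · rw [reroute_apply_of_mem hz hq₁ ha, reroute_apply_of_mem hz hq₂ hb] at h
      exact (R d).injective h

variable [Fintype ι]

def cylinder (D : Finset (ι × α)) (R : ι → Perm α) : Finset (ι → Perm α) :=
  {Y | ∀ x ∈ D, Y x.1 x.2 = R x.1 x.2}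

@[simp]
theorem mem_cylinder : Y ∈ cylinder D R ↔ ∀ x ∈ D, Y x.1 x.2 = R x.1 x.2 := by
  simp [cylinder]

theorem mem_cylinder_self : R ∈ cylinder D R := by simp

@[simp]
theorem cylinder_empty (R : ι → Perm α) : cylinder ∅ R = univ := by ext; simp

theorem cylinder_eq_of_mem (h : X ∈ cylinder D R) : cylinder D X = cylinder D R := by
  ext Y
  simp only [mem_cylinder] at h ⊢
  exact forall₂_congr fun x hx => by rw [h x hx]

theorem mem_cylinder_union_steps (hX : X ∈ cylinder D R) {L : List ι} {z : α} :
    Y ∈ cylinder (D ∪ steps X L z) X ↔ Y ∈ cylinder D R ∧ traj Y L z = traj X L z := by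
  rw [← cylinder_eq_of_mem hX, ← forall_steps_iff_traj_eq]
  simp only [mem_cylinder, forall_mem_union]

theorem apply_mem_freeValues (hz : (c, z) ∉ D) (hY : Y ∈ cylinder D R) :
    Y c z ∈ freeValues D R c := by
  refine mem_freeValues.2 fun a ha h => ?_
  rw [← mem_cylinder.1 hY _ ha] at h
  exact hz ((Y c).injective h ▸ ha)

theorem mem_cylinder_reroute_iff (hz : (c, z) ∉ D) (hq : q ∈ freeValues D R c) :
    Y ∈ cylinder (insert (c, z) D) (reroute R c z q) ↔ Y ∈ cylinder D R ∧ Y c z = q := by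
  simp only [mem_cylinder, forall_mem_insert, reroute_apply_self, and_comm (a := Y c z = q)]
  exact and_congr_left' (forall₂_congr fun x hx => by rw [reroute_apply_of_mem hz hq hx])

theorem card_filter_apply_eq_le (hq₁ : q₁ ∈ freeValues D R c) (hq₂ : q₂ ∈ freeValues D R c) :
    #{Y ∈ cylinder D R | Y c z = q₁} ≤ #{Y ∈ cylinder D R | Y c z = q₂} := by
  refine card_le_card_of_injOn (Pi.mulSingle c (swap q₁ q₂) * ·) (fun Y hY => ?_)
    (mul_right_injective _).injOn
  simp only [coe_filter, Set.mem_ofPred_eq, mem_cylinder] at hY ⊢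
  refine ⟨fun x hx => ?_, by simp [hY.2]⟩
  by_cases hd : x.1 = c
  · obtain ⟨d, a⟩ := x
    simp only at hd
    subst hd
    rw [Pi.mul_apply, Pi.mulSingle_eq_same, Perm.mul_apply, hY.1 _ hx]
    exact swap_apply_of_ne_of_ne ((mem_freeValues.1 hq₁) a hx) ((mem_freeValues.1 hq₂) a hx)
  · simp [Pi.mulSingle_eq_of_ne hd, hY.1 x hx]

theorem card_filter_cylinder_eq_sum (hz : (c, z) ∉ D) (P : α → (ι → Perm α) → Prop)
    [∀ q, DecidablePred (P q)] :
    #{Y ∈ cylinder D R | P (Y c z) Y} =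
      ∑ q ∈ freeValues D R c, #{Y ∈ cylinder (insert (c, z) D) (reroute R c z q) | P q Y} := by
  rw [card_eq_sum_card_fiberwise fun Y hY => apply_mem_freeValues hz (mem_filter.1 hY).1]
  refine sum_congr rfl fun q hq => congrArg card (ext fun Y => ?_)
  simp only [mem_filter, mem_cylinder_reroute_iff hz hq]
  constructor
  · rintro ⟨⟨hY, hP⟩, rfl⟩
    exact ⟨⟨hY, rfl⟩, hP⟩
  · rintro ⟨⟨hY, rfl⟩, hP⟩
    exact ⟨⟨hY, hP⟩, rfl⟩

theorem card_cylinder_eq_sum (hz : (c, z) ∉ D) :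
    #(cylinder D R) = ∑ q ∈ freeValues D R c, #(cylinder (insert (c, z) D) (reroute R c z q)) := by
  simpa using card_filter_cylinder_eq_sum (R := R) hz fun _ _ => True

theorem mul_card_cylinder_reroute_le {m : ℕ} (hz : (c, z) ∉ D) (hq : q ∈ freeValues D R c)
    (hm : #D + m ≤ Fintype.card α) :
    m * #(cylinder (insert (c, z) D) (reroute R c z q)) ≤ #(cylinder D R) := by
  have hfiber : ∀ q' ∈ freeValues D R c,
      #(cylinder (insert (c, z) D) (reroute R c z q')) = #{Y ∈ cylinder D R | Y c z = q'} :=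
    fun q' hq' => congrArg card (ext fun Y => by rw [mem_cylinder_reroute_iff hz hq', mem_filter])
  calc m * #(cylinder (insert (c, z) D) (reroute R c z q))
      ≤ #(freeValues D R c) * #{Y ∈ cylinder D R | Y c z = q} := by
        rw [hfiber q hq]
        gcongr
        have := card_le_card_add_card_freeValues D R c
        omega
    _ = ∑ _ ∈ freeValues D R c, #{Y ∈ cylinder D R | Y c z = q} := by rw [sum_const, smul_eq_mul]
    _ ≤ ∑ q' ∈ freeValues D R c, #{Y ∈ cylinder D R | Y c z = q'} :=
        sum_le_sum fun q' hq' => card_filter_apply_eq_le hq hq'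
    _ = #(cylinder D R) := by
        rw [card_cylinder_eq_sum hz]
        exact sum_congr rfl fun q' hq' => (hfiber q' hq').symm

theorem mul_card_filter_le_of_free {m k : ℕ} (hz : (c, z) ∉ D) (P : α → (ι → Perm α) → Prop)
    [∀ q, DecidablePred (P q)] (f : α → ℕ)
    (hP : ∀ q ∈ freeValues D R c,
      m * #{Y ∈ cylinder (insert (c, z) D) (reroute R c z q) | P q Y} ≤
        k * #(cylinder (insert (c, z) D) (reroute R c z q)) + f q)
    (hf : ∑ q ∈ freeValues D R c, f q ≤ #(cylinder D R)) :
    m * #{Y ∈ cylinder D R | P (Y c z) Y} ≤ (k + 1) * #(cylinder D R) :=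
  calc m * #{Y ∈ cylinder D R | P (Y c z) Y}
      = ∑ q ∈ freeValues D R c,
          m * #{Y ∈ cylinder (insert (c, z) D) (reroute R c z q) | P q Y} := by
        rw [card_filter_cylinder_eq_sum hz, mul_sum]
    _ ≤ ∑ q ∈ freeValues D R c, (k * #(cylinder (insert (c, z) D) (reroute R c z q)) + f q) :=
        sum_le_sum hP
    _ ≤ (k + 1) * #(cylinder D R) := by
        rw [sum_add_distrib, ← mul_sum, ← card_cylinder_eq_sum hz, add_one_mul]
        exact Nat.add_le_add_left hf _

theorem mul_card_walk_eq_le (m : ℕ) :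
    ∀ (L : List ι) (D : Finset (ι × α)) (R : ι → Perm α) (z T : α),
      #D + L.length + m ≤ Fintype.card α →
      m * #{Y ∈ cylinder D R | walk Y L z = T} ≤
        L.length * #(cylinder D R) +
          if forcedWalk D R L z = some T then m * #(cylinder D R) else 0
  | [], D, R, z, T, _ => by
    by_cases h : z = T <;> simp [walk, forcedWalk, h]
  | c :: L, D, R, z, T, hm => by
    rw [List.length_cons] at hm ⊢
    by_cases hz : (c, z) ∈ D
    · have hfilter : {Y ∈ cylinder D R | walk Y (c :: L) z = T} =
          {Y ∈ cylinder D R | walk Y L (R c z) = T} :=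
        filter_congr fun Y hY => by rw [walk, mem_cylinder.1 hY _ hz]
      have := mul_card_walk_eq_le m L D R (R c z) T (by omega)
      rw [hfilter, forcedWalk_of_mem hz, add_one_mul]
      omega
    · rw [forcedWalk_of_notMem hz, if_neg nofun, add_zero]
      refine mul_card_filter_le_of_free hz (fun q Y => walk Y L q = T)
        (fun q => if forcedWalk (insert (c, z) D) (reroute R c z q) L q = some T
          then m * #(cylinder (insert (c, z) D) (reroute R c z q)) else 0)
        (fun q _ => mul_card_walk_eq_le m L _ _ q T (by rw [card_insert_of_notMem hz]; omega)) ?_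
      -- Forced walks from two free values cannot end at the same point.
      rw [← sum_filter]
      calc _ ≤ #{q ∈ freeValues D R c |
              forcedWalk (insert (c, z) D) (reroute R c z q) L q = some T} • #(cylinder D R) :=
            sum_le_card_nsmul _ _ _ fun q hq =>
              mul_card_cylinder_reroute_le hz (mem_filter.1 hq).1 (by omega)
        _ ≤ 1 • #(cylinder D R) := by
            gcongr
            refine card_le_one.2 fun q₁ h₁ q₂ h₂ => ?_
            rw [mem_filter] at h₁ h₂
            exact eq_of_forcedWalk_eq_some (reroute_inj hz h₁.1 h₂.1) h₁.2 h₂.2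
        _ = #(cylinder D R) := one_smul _ _

theorem mul_card_mem_traj_le (m : ℕ) {p : α} :
    ∀ (L : List ι) (D : Finset (ι × α)) (R : ι → Perm α) (z : α),
      (∀ x ∈ D, R x.1 x.2 ≠ p) → #D + L.length + m ≤ Fintype.card α →
      m * #{Y ∈ cylinder D R | p ∈ traj Y L z} ≤ L.length * #(cylinder D R)
  | [], D, R, z, _, _ => by simp [traj]
  | c :: L, D, R, z, hp, hm => by
    rw [List.length_cons] at hm ⊢
    by_cases hz : (c, z) ∈ D
    · have hfilter : {Y ∈ cylinder D R | p ∈ traj Y (c :: L) z} =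
          {Y ∈ cylinder D R | p ∈ traj Y L (R c z)} :=
        filter_congr fun Y hY => by
          rw [traj, mem_cylinder.1 hY _ hz, List.mem_cons, or_iff_right (hp _ hz).symm]
      have := mul_card_mem_traj_le m L D R (R c z) hp (by omega)
      rw [hfilter, add_one_mul]
      omega
    · refine mul_card_filter_le_of_free hz (fun q Y => p ∈ q :: traj Y L q)
        (fun q => if q = p then #(cylinder D R) else 0) (fun q hq => ?_) ?_
      · by_cases hqp : q = p
        · subst hqp
          rw [if_pos rfl]
          calc _ ≤ m * #(cylinder (insert (c, z) D) (reroute R c z q)) := by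
                gcongr
                exact filter_subset _ _
            _ ≤ #(cylinder D R) := mul_card_cylinder_reroute_le hz hq (by omega)
            _ ≤ _ := le_add_self
        · have hfilter : {Y ∈ cylinder (insert (c, z) D) (reroute R c z q) | p ∈ q :: traj Y L q} =
              {Y ∈ cylinder (insert (c, z) D) (reroute R c z q) | p ∈ traj Y L q} :=
            filter_congr fun Y _ => by rw [List.mem_cons, or_iff_right (Ne.symm hqp)]
          rw [if_neg hqp, add_zero, hfilter]
          refine mul_card_mem_traj_le m L _ _ q (fun x hx => ?_)
            (by rw [card_insert_of_notMem hz]; omega)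
          rcases mem_insert.1 hx with rfl | hx
          · rwa [reroute_apply_self]
          · rw [reroute_apply_of_mem hz hq hx]
            exact hp x hx
      · rw [sum_ite_eq']
        split_ifs <;> simp

theorem mul_card_walk_eq_walk_le {m : ℕ} {U V : List ι} {p : α} (hne : U.head? ≠ V.head?)
    (hp : ∀ x ∈ D, x.2 ≠ p ∧ R x.1 x.2 ≠ p)
    (hm : #D + (U.length + V.length) + m ≤ Fintype.card α) :
    m * #{Y ∈ cylinder D R | walk Y U p = walk Y V p} ≤
      (U.length + V.length) * #(cylinder D R) := by
  set C := cylinder D R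
  -- In a fiber of the trajectory along `V`, the walk along `U` has a fixed target.
  have hfiber : ∀ τ ∈ C.image (traj · V p),
      m * #{Y ∈ {Y ∈ C | traj Y V p = τ} | walk Y U p = walk Y V p} ≤
        U.length * #{Y ∈ C | traj Y V p = τ} +
          m * #{Y ∈ {Y ∈ C | traj Y V p = τ} | p ∈ traj Y V p} := by
    intro τ hτ
    obtain ⟨X, hX, rfl⟩ := mem_image.1 hτ
    have hF : {Y ∈ C | traj Y V p = traj X V p} = cylinder (D ∪ steps X V p) X := by
      ext Y
      rw [mem_filter, mem_cylinder_union_steps hX]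
    have htraj : ∀ Y ∈ cylinder (D ∪ steps X V p) X, traj Y V p = traj X V p :=
      fun Y hY => ((mem_cylinder_union_steps hX).1 hY).2
    rw [hF, filter_congr fun Y hY => by rw [walk_eq_of_traj_eq (htraj Y hY)]]
    refine (mul_card_walk_eq_le m U _ X p _ ?_).trans (Nat.add_le_add_left ?_ _)
    · have := card_union_le D (steps X V p)
      have := card_steps_le X V p
      omega
    · split_ifs with h
      · rw [filter_true_of_mem fun Y hY => htraj Y hY ▸
          mem_traj_of_forcedWalk_eq_some (fun x hx => (hp x hx).1) hne h]
      · exact Nat.zero_le _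
  calc m * #{Y ∈ C | walk Y U p = walk Y V p}
      = ∑ τ ∈ C.image (traj · V p),
          m * #{Y ∈ {Y ∈ C | traj Y V p = τ} | walk Y U p = walk Y V p} := by
        rw [card_filter_eq_sum_card_filter_fiber _ (traj · V p), mul_sum]
    _ ≤ ∑ τ ∈ C.image (traj · V p), (U.length * #{Y ∈ C | traj Y V p = τ} +
          m * #{Y ∈ {Y ∈ C | traj Y V p = τ} | p ∈ traj Y V p}) := sum_le_sum hfiber
    _ = U.length * #C + m * #{Y ∈ C | p ∈ traj Y V p} := by
        rw [sum_add_distrib, ← mul_sum, ← mul_sum, ← card_eq_sum_card_image,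
          ← card_filter_eq_sum_card_filter_fiber]
    _ ≤ U.length * #C + V.length * #C := Nat.add_le_add_left
        (mul_card_mem_traj_le m V D R p (fun x hx => (hp x hx).2) (by omega)) _
    _ = (U.length + V.length) * #C := (add_mul _ _ _).symm

theorem pow_mul_card_forall_walk_eq_walk_le {U V : List ι} (hne : U.head? ≠ V.head?) :
    ∀ (j : ℕ) (D : Finset (ι × α)) (R : ι → Perm α),
      2 * (#D + j * (U.length + V.length)) ≤ Fintype.card α →
      Fintype.card α ^ j * #{Y ∈ cylinder D R | ∀ z, walk Y U z = walk Y V z} ≤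
        (2 * (U.length + V.length)) ^ j * #(cylinder D R)
  | 0, D, R, _ => by simpa using card_filter_le _ _
  | j + 1, D, R, hj => by
    set n := Fintype.card α
    set ℓ := U.length + V.length
    set C := cylinder D R
    have hℓ : 0 < ℓ := by
      rcases U with _ | ⟨a, U⟩ <;> rcases V with _ | ⟨b, V⟩ <;> simp_all [ℓ]
    have hjℓ : (j + 1) * ℓ = j * ℓ + ℓ := Nat.add_one_mul j ℓ
    obtain ⟨p, hp⟩ := exists_fresh D R (by omega)
    -- A fiber of both trajectories from `p` has no solution unless the walks meet at `p`, and then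
    -- it is a cylinder with at most `ℓ` more prescribed points.
    let f (Y : ι → Perm α) : List α × List α := (traj Y U p, traj Y V p)
    have hfiber : ∀ τ ∈ C.image f,
        n ^ j * #{Y ∈ {Y ∈ C | f Y = τ} | ∀ z, walk Y U z = walk Y V z} ≤
          (2 * ℓ) ^ j * #{Y ∈ {Y ∈ C | f Y = τ} | walk Y U p = walk Y V p} := by
      intro τ hτ
      obtain ⟨X, hX, rfl⟩ := mem_image.1 hτ
      set D' := D ∪ steps X U p ∪ steps X V p
      have hF : {Y ∈ C | f Y = f X} = cylinder D' X := by
        ext Y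
        rw [mem_cylinder_union_steps mem_cylinder_self, mem_cylinder_union_steps hX, mem_filter,
          Prod.mk.injEq, and_assoc]
      have hwalk : ∀ Y ∈ cylinder D' X, walk Y U p = walk X U p ∧ walk Y V p = walk X V p := by
        intro Y hY
        rw [← hF, mem_filter, Prod.mk.injEq] at hY
        exact ⟨walk_eq_of_traj_eq hY.2.1, walk_eq_of_traj_eq hY.2.2⟩
      rw [hF]
      by_cases hX' : walk X U p = walk X V p
      · rw [filter_true_of_mem (p := fun Y => walk Y U p = walk Y V p) fun Y hY => by
          rw [(hwalk Y hY).1, (hwalk Y hY).2, hX']]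
        refine pow_mul_card_forall_walk_eq_walk_le hne j D' X ?_
        have hD' : #D' ≤ #D + ℓ :=
          calc #D' ≤ #(D ∪ steps X U p) + #(steps X V p) := card_union_le _ _
            _ ≤ #D + #(steps X U p) + #(steps X V p) := by gcongr; exact card_union_le _ _
            _ ≤ #D + ℓ := by
              have := card_steps_le X U p
              have := card_steps_le X V p
              omega
        show 2 * (#D' + j * ℓ) ≤ n
        omega
      · rw [filter_false_of_mem fun Y hY hsol =>
          hX' ((hwalk Y hY).1.symm.trans ((hsol p).trans (hwalk Y hY).2)), card_empty, mul_zero]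
        exact Nat.zero_le _
    have hround : n * #{Y ∈ C | walk Y U p = walk Y V p} ≤ 2 * ℓ * #C := by
      have := mul_card_walk_eq_walk_le (m := n - (#D + ℓ)) hne hp (by omega)
      calc n * #{Y ∈ C | walk Y U p = walk Y V p}
          ≤ 2 * ((n - (#D + ℓ)) * #{Y ∈ C | walk Y U p = walk Y V p}) := by
            rw [← mul_assoc]
            exact Nat.mul_le_mul_right _ (by omega)
        _ ≤ 2 * ℓ * #C := by rw [mul_assoc]; exact Nat.mul_le_mul_left _ this
    calc n ^ (j + 1) * #{Y ∈ C | ∀ z, walk Y U z = walk Y V z}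
        = n * ∑ τ ∈ C.image f,
            n ^ j * #{Y ∈ {Y ∈ C | f Y = τ} | ∀ z, walk Y U z = walk Y V z} := by
          rw [_root_.pow_succ', mul_assoc, card_filter_eq_sum_card_filter_fiber _ f, mul_sum]
      _ ≤ n * ∑ τ ∈ C.image f,
            (2 * ℓ) ^ j * #{Y ∈ {Y ∈ C | f Y = τ} | walk Y U p = walk Y V p} :=
          Nat.mul_le_mul_left _ (sum_le_sum hfiber)
      _ = (2 * ℓ) ^ j * (n * #{Y ∈ C | walk Y U p = walk Y V p}) := by
          rw [← mul_sum, ← card_filter_eq_sum_card_filter_fiber, mul_left_comm]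
      _ ≤ (2 * ℓ) ^ (j + 1) * #C := by
          rw [pow_succ, mul_assoc]
          exact Nat.mul_le_mul_left _ hround

theorem pow_mul_card_lift_eq_le {u v : FreeMonoid ι} (huv : u ≠ v) (k : ℕ)
    (hk : 2 * k * (u.length + v.length) ≤ Fintype.card α) :
    Fintype.card α ^ k * #{X : ι → Perm α | FreeMonoid.lift X u = FreeMonoid.lift X v} ≤
      (2 * (u.length + v.length)) ^ k * (Fintype.card α)! ^ Fintype.card ι := by
  obtain ⟨t₁, t₂, hne, hlen, hiff⟩ := exists_head?_ne_and_walk_eq_iff (α := α)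
    fun h => huv (FreeMonoid.toList.injective (List.reverse_injective h))
  rw [List.length_reverse, List.length_reverse] at hlen
  have hsol : ({X | FreeMonoid.lift X u = FreeMonoid.lift X v} : Finset (ι → Perm α)) =
      {Y ∈ cylinder ∅ (1 : ι → Perm α) | ∀ z, walk Y t₁ z = walk Y t₂ z} := by
    ext X
    simp only [cylinder_empty, mem_filter, mem_univ, true_and, Perm.ext_iff, lift_apply_eq_walk,
      hiff]
  have hk' : 2 * (k * (t₁.length + t₂.length)) ≤ Fintype.card α :=
    calc 2 * (k * (t₁.length + t₂.length)) ≤ 2 * k * (u.length + v.length) := by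
          rw [← mul_assoc]; exact Nat.mul_le_mul_left _ hlen
      _ ≤ _ := hk
  calc _ ≤ (2 * (t₁.length + t₂.length)) ^ k * #(cylinder ∅ (1 : ι → Perm α)) := by
        rw [hsol]
        exact pow_mul_card_forall_walk_eq_walk_le hne k ∅ 1 (by rwa [card_empty, zero_add])
    _ ≤ _ := by
        rw [cylinder_empty, Finset.card_univ, Fintype.card_fun, Fintype.card_perm]
        exact Nat.mul_le_mul_right _ (Nat.pow_le_pow_left (Nat.mul_le_mul_left 2 hlen) k)

end WordMap

theorem word_satisfaction_probability (u v : FreeMonoid (Fin 2)) (huv : u ≠ v)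
    (n : ℕ) (hn : 2 * (u.length + v.length) ≤ n) :
    (Nat.card {p : Perm (Fin n) × Perm (Fin n) //
          FreeMonoid.lift ![p.1, p.2] u = FreeMonoid.lift ![p.1, p.2] v} : ℝ) /
        ((n ! : ℝ)) ^ 2 ≤
      ((2 * (u.length + v.length) : ℝ) / (n : ℝ)) ^ (n / (2 * (u.length + v.length))) := by
  have hℓ : 0 < u.length + v.length := by
    by_contra h
    exact huv ((FreeMonoid.length_eq_zero.1 (by omega)).trans
      (FreeMonoid.length_eq_zero.1 (by omega)).symm)
  have hcard : Nat.card {p : Perm (Fin n) × Perm (Fin n) //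
        FreeMonoid.lift ![p.1, p.2] u = FreeMonoid.lift ![p.1, p.2] v} =
      #{X : Fin 2 → Perm (Fin n) | FreeMonoid.lift X u = FreeMonoid.lift X v} := by
    rw [← Fintype.card_subtype, ← Nat.card_eq_fintype_card]
    exact Nat.card_congr ((finTwoArrowEquiv _).symm.subtypeEquiv fun _ => Iff.rfl)
  have key := WordMap.pow_mul_card_lift_eq_le (α := Fin n) huv (n / (2 * (u.length + v.length)))
    (by rw [Fintype.card_fin, mul_comm 2, mul_assoc]; exact Nat.div_mul_le_self n _)
  rw [Fintype.card_fin, Fintype.card_fin] at key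
  rw [hcard, div_pow, div_le_div_iff₀ (by positivity) (pow_pos (by norm_cast; omega) _)]
  exact_mod_cast (mul_comm _ _).trans_le key
end

section
/- For every r ≥ 1 and every n ≥ 4r, if x and y are independent uniformly random elements of the symmetric group S_n, then the probability that there exist two distinct positive words u, u′ in two letters, each of length strictly less than r, with u(x,y) = u′(x,y), is at most 4^r · (4r/n)^⌊n/(4r)⌋. -/
/-!
Expose the permutations one value at a time, counting tuples `z` through the values
`z ℓ a = b` prescribed so far. Given at most `k` prescribed values, a step of a walk whose
value is not yet prescribed is uniform among at least `N - k` points, so it hits a given point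
with probability at most `1 / (N - k)`.

Stripping the longest common suffix turns `u(z) = u'(z)` into `v(z) = v'(z)` with different
last letters; then the walk `p ↦ v'(z)⁻¹ (v(z) p)` returns to `p` for every point `p`. If no
prescribed value involves `p`, the walk can only get back to `p` through a fresh step, so it
returns with probability at most `L / (N - K)`, where `L = |v| + |v'| ≤ 2r` and at most
`K ≤ N / 2` values are ever prescribed. Running `⌊N / 4r⌋` such walks from successive untouched
points gives `(4r / N) ^ ⌊N / 4r⌋`, and a union bound over the fewer than `2 ^ r · 2 ^ r`
pairs of short words gives the factor `4 ^ r`.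
-/

open Equiv Finset

theorem List.exists_append_head?_ne {α : Type*} {l l' : List α} (h : l ≠ l') :
    ∃ w v v', l = w ++ v ∧ l' = w ++ v' ∧ v.head? ≠ v'.head? := by
  induction l generalizing l' with
  | nil => exact ⟨[], [], l', rfl, rfl, by cases l' <;> simp_all⟩
  | cons a l ih =>
    cases l' with
    | nil => exact ⟨[], a :: l, [], rfl, rfl, by simp⟩
    | cons b l' =>
      by_cases hab : a = b
      · subst hab
        obtain ⟨w, v, v', rfl, rfl, hvv'⟩ := ih fun h' => h (by rw [h'])
        exact ⟨a :: w, v, v', rfl, rfl, hvv'⟩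
      · exact ⟨[], a :: l, b :: l', rfl, rfl, by simpa⟩

theorem List.exists_append_getLast?_ne {α : Type*} {l l' : List α} (h : l ≠ l') :
    ∃ v v' w, l = v ++ w ∧ l' = v' ++ w ∧ v.getLast? ≠ v'.getLast? := by
  obtain ⟨w, v, v', hl, hl', hvv'⟩ :=
    List.exists_append_head?_ne (l := l.reverse) (l' := l'.reverse) (by simpa using h)
  refine ⟨v.reverse, v'.reverse, w.reverse, ?_, ?_, by simpa using hvv'⟩
  · rw [← List.reverse_reverse l, hl, List.reverse_append]
  · rw [← List.reverse_reverse l', hl', List.reverse_append]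

def List.shortWords (α : Type*) [Fintype α] [DecidableEq α] (r : ℕ) : Finset (List α) :=
  (Finset.range r).biUnion fun k => univ.image (List.ofFn : (Fin k → α) → List α)

theorem List.mem_shortWords {α : Type*} [Fintype α] [DecidableEq α] {r : ℕ} {l : List α} :
    l ∈ List.shortWords α r ↔ l.length < r := by
  simp only [List.shortWords, mem_biUnion, Finset.mem_range, mem_image, mem_univ, true_and]
  constructor
  · rintro ⟨k, hk, f, rfl⟩
    simpa using hk
  · exact fun h => ⟨l.length, h, l.get, List.ofFn_get l⟩

theorem List.card_shortWords_le {α : Type*} [Fintype α] [DecidableEq α] (r : ℕ) :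
    #(List.shortWords α r) ≤ ∑ k ∈ Finset.range r, Fintype.card α ^ k :=
  card_biUnion_le.trans <| sum_le_sum fun k _ => card_image_le.trans (by simp)

namespace PermTuple

variable {ι α : Type*} [DecidableEq α] [Fintype α]

theorem exists_forall_ne_of_two_mul_card_lt (σ : Finset (ι × α × α))
    (h : 2 * #σ < Fintype.card α) : ∃ p : α, ∀ e ∈ σ, e.2.1 ≠ p ∧ e.2.2 ≠ p := by
  have hcard : #(σ.image (·.2.1) ∪ σ.image (·.2.2)) < #(univ : Finset α) :=
    calc _ ≤ #(σ.image (·.2.1)) + #(σ.image (·.2.2)) := card_union_le _ _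
      _ ≤ #σ + #σ := add_le_add card_image_le card_image_le
      _ < #(univ : Finset α) := by rw [card_univ]; omega
  obtain ⟨p, -, hp⟩ := exists_mem_notMem_of_card_lt_card hcard
  refine ⟨p, fun e he => ⟨fun h => hp ?_, fun h => hp ?_⟩⟩
  · exact mem_union_left _ (mem_image.2 ⟨e, he, h⟩)
  · exact mem_union_right _ (mem_image.2 ⟨e, he, h⟩)

variable [DecidableEq ι] [Fintype ι]

/-- A triple `(ℓ, a, b)` prescribes `z ℓ a = b`. -/
def extensions (σ : Finset (ι × α × α)) : Finset (ι → Perm α) :=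
  univ.filter fun z => ∀ e ∈ σ, z e.1 e.2.1 = e.2.2

@[simp]
theorem mem_extensions {σ : Finset (ι × α × α)} {z : ι → Perm α} :
    z ∈ extensions σ ↔ ∀ e ∈ σ, z e.1 e.2.1 = e.2.2 := by
  simp [extensions]

@[simp]
theorem extensions_empty : extensions (∅ : Finset (ι × α × α)) = univ := by
  ext; simp

theorem extensions_insert (e : ι × α × α) (σ : Finset (ι × α × α)) :
    extensions (insert e σ) = (extensions σ).filter fun z => z e.1 e.2.1 = e.2.2 := by
  ext; simp [and_comm]

theorem card_filter_apply_eq_mul_le {σ : Finset (ι × α × α)} {ℓ : ι} {c : α}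
    (hc : ∀ e ∈ σ, e.1 = ℓ → e.2.1 ≠ c) (p : α) :
    #((extensions σ).filter (· ℓ c = p)) * (Fintype.card α - #σ) ≤ #(extensions σ) := by
  set A := univ \ σ.image (·.2.2)
  have hA : Fintype.card α - #σ ≤ #A := by
    rw [card_sdiff_of_subset (subset_univ _), card_univ]
    exact Nat.sub_le_sub_left card_image_le _
  calc _ ≤ #((extensions σ).filter (· ℓ c = p)) * #A := Nat.mul_le_mul_left _ hA
    _ = #((extensions σ).filter (· ℓ c = p) ×ˢ A) := (card_product _ _).symm
    _ ≤ _ := by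
      -- `swap p b ∘ z ℓ` moves `z` from the fibre over `p` to the fibre over `b`.
      refine card_le_card_of_injOn (fun x => Function.update x.1 ℓ (swap p x.2 * x.1 ℓ)) ?_ ?_
      · rintro ⟨z, b⟩ hzb
        simp only [coe_product, Set.mem_prod, coe_filter, Set.mem_ofPred_eq, mem_extensions, A,
          mem_coe, mem_sdiff, mem_univ, mem_image, true_and, not_exists, not_and] at hzb ⊢
        obtain ⟨⟨hz, rfl⟩, hb⟩ := hzb
        intro e he
        by_cases hℓ : e.1 = ℓ
        · subst hℓ
          rw [Function.update_self, Perm.mul_apply, hz e he]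
          refine swap_apply_of_ne_of_ne (fun h => hc e he rfl ?_) (hb e he)
          exact (z e.1).injective ((hz e he).trans h)
        · rw [Function.update_of_ne hℓ, hz e he]
      · rintro ⟨z, b⟩ hzb ⟨z', b'⟩ hzb' h
        simp only [coe_product, Set.mem_prod, coe_filter, Set.mem_ofPred_eq] at hzb hzb'
        have hb : b = b' := by
          simpa [hzb.1.2, hzb'.1.2] using congrArg (fun w => w ℓ c) h
        subst hb
        refine Prod.ext (funext fun ℓ' => ?_) rfl
        by_cases hℓ : ℓ' = ℓ
        · subst hℓ; simpa using congrArg (· ℓ') h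
        · simpa [Function.update_of_ne hℓ] using congrArg (· ℓ') h

theorem card_filter_inv_apply_eq_mul_le {σ : Finset (ι × α × α)} {ℓ : ι} {c : α}
    (hc : ∀ e ∈ σ, e.1 = ℓ → e.2.2 ≠ c) (p : α) :
    #((extensions σ).filter (fun z => (z ℓ)⁻¹ c = p)) * (Fintype.card α - #σ) ≤
      #(extensions σ) := by
  -- Inverting the tuple turns the backward step into a forward one.
  set σ' := σ.image fun e => (e.1, e.2.2, e.2.1)
  have hext : extensions σ' = (extensions σ).map (Equiv.inv _).toEmbedding := by
    ext z
    rw [mem_map_equiv, mem_extensions, mem_extensions, forall_mem_image]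
    refine forall₂_congr fun e _ => ?_
    rw [eq_comm]
    exact (Perm.inv_eq_iff_eq (f := z e.1)).symm
  have h := card_filter_apply_eq_mul_le (σ := σ') (ℓ := ℓ) (c := c)
    (by simpa only [σ', forall_mem_image] using hc) p
  rw [hext, filter_map, card_map, card_map] at h
  exact (Nat.mul_le_mul_left _ (Nat.sub_le_sub_left card_image_le _)).trans h

/-- In probabilistic terms: given any at most `K` prescribed values, a uniform tuple lies in `G`
with probability at most `β`. -/
def CondDensityLE (G : Finset (ι → Perm α)) (β : ℝ) (K : ℕ) : Prop :=
  ∀ σ : Finset (ι × α × α), #σ ≤ K → (#(G ∩ extensions σ) : ℝ) ≤ β * #(extensions σ)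

section Walks

variable {G : Finset (ι → Perm α)} {β : ℝ} {K : ℕ}

theorem card_inter_extensions_insert_le (hG : CondDensityLE G β K) (hβ : 0 ≤ β)
    (hK : K < Fintype.card α) {σ : Finset (ι × α × α)} (hσ : #σ < K) (e : ι × α × α)
    (hhit : #(extensions (insert e σ)) * (Fintype.card α - #σ) ≤ #(extensions σ)) :
    (#(G ∩ extensions (insert e σ)) : ℝ) ≤ β / (Fintype.card α - K) * #(extensions σ) := by
  have hNK : (0 : ℝ) < Fintype.card α - K := by
    rw [sub_pos]; exact_mod_cast hK
  have hhit' : (#(extensions (insert e σ)) : ℝ) * (Fintype.card α - K) ≤ #(extensions σ) := by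
    rw [← Nat.cast_sub hK.le]
    exact_mod_cast (Nat.mul_le_mul_left _ (by omega)).trans hhit
  calc _ ≤ β * #(extensions (insert e σ)) := hG _ ((card_insert_le _ _).trans hσ)
    _ ≤ β / (Fintype.card α - K) * #(extensions σ) := by
      rw [div_mul_eq_mul_div, le_div_iff₀ hNK, mul_assoc]
      exact mul_le_mul_of_nonneg_left hhit' hβ

-- Split by the value `b = f z` of a step that is not yet prescribed: landing on `p` costs
-- `β / (N - K)`, every other branch continues with one more prescription.
theorem card_filter_step_le (hG : CondDensityLE G β K) (hβ : 0 ≤ β)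
    (hK : K < Fintype.card α) {σ : Finset (ι × α × α)} (hσ : #σ < K)
    (f : (ι → Perm α) → α) (edge : α → ι × α × α)
    (hedge : ∀ b, extensions (insert (edge b) σ) = (extensions σ).filter (f · = b)) {p : α}
    (hhit : #((extensions σ).filter (f · = p)) * (Fintype.card α - #σ) ≤ #(extensions σ))
    (w : α → (ι → Perm α) → α) {Q : ℝ} (hQ : 0 ≤ Q)
    (hrest : ∀ b ≠ p, (#((G ∩ extensions (insert (edge b) σ)).filter (w b · = p)) : ℝ) ≤
      Q * #(extensions (insert (edge b) σ))) :
    (#((G ∩ extensions σ).filter fun z => w (f z) z = p) : ℝ) ≤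
      (β / (Fintype.card α - K) + Q) * #(extensions σ) := by
  set E := extensions σ
  have hfiber : ∀ b, ((G ∩ E).filter fun z => w (f z) z = p).filter (f · = b) =
      (G ∩ extensions (insert (edge b) σ)).filter (w b · = p) := by
    intro b
    ext z
    simp only [hedge, mem_filter, mem_inter]
    constructor
    · rintro ⟨⟨⟨hzG, hzE⟩, hw⟩, rfl⟩; exact ⟨⟨hzG, hzE, rfl⟩, hw⟩
    · rintro ⟨⟨hzG, hzE, rfl⟩, hw⟩; exact ⟨⟨⟨hzG, hzE⟩, hw⟩, rfl⟩
  have hp : (#((G ∩ extensions (insert (edge p) σ)).filter (w p · = p)) : ℝ) ≤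
      β / (Fintype.card α - K) * #E :=
    (Nat.cast_le.2 (card_filter_le _ _)).trans
      (card_inter_extensions_insert_le hG hβ hK hσ _ (by rwa [hedge]))
  have hothers : ∑ b ∈ univ.erase p,
      (#((G ∩ extensions (insert (edge b) σ)).filter (w b · = p)) : ℝ) ≤ Q * #E := by
    calc _ ≤ ∑ b ∈ univ.erase p, Q * #(E.filter (f · = b)) := by
          refine sum_le_sum fun b hb => ?_
          rw [← hedge]; exact hrest b (ne_of_mem_erase hb)
      _ ≤ ∑ b, Q * #(E.filter (f · = b)) :=
          sum_le_sum_of_subset_of_nonneg (erase_subset _ _) fun _ _ _ => by positivity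
      _ = Q * #E := by
          rw [← mul_sum, card_eq_sum_card_fiberwise (f := f) (t := univ) (by simp)]
          push_cast; rfl
  rw [card_eq_sum_card_fiberwise (f := f) (t := univ) (by simp)]
  simp only [hfiber]
  rw [← add_sum_erase _ _ (mem_univ p)]
  push_cast
  linarith

-- A prescribed backward step enters `p` only along a prescription `(g, p, c)`, which the last
-- letter rules out at the end; so the walk can end at `p` only through a fresh step.
theorem card_filter_inv_prod_apply_eq_le (hG : CondDensityLE G β K) (hβ : 0 ≤ β)
    (hK : K < Fintype.card α) {p : α} {g : ι} (B : List ι) :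
    ∀ (σ : Finset (ι × α × α)) (c : α), #σ + B.length ≤ K →
      (∀ e ∈ σ, e.2.1 = p → e.1 = g) → B.getLast? ≠ some g → (B = [] → c ≠ p) →
      (#((G ∩ extensions σ).filter fun z => (B.map z).prod⁻¹ c = p) : ℝ) ≤
        B.length * (β / (Fintype.card α - K)) * #(extensions σ) := by
  induction B with
  | nil =>
    intro σ c _ _ _ hc
    simp [hc rfl]
  | cons ℓ B ih =>
    intro σ c hbudget hout hlast _
    have hlast' : B.getLast? ≠ some g := by
      cases B <;> simp_all
    have hstep : ∀ z : ι → Perm α,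
        ((ℓ :: B).map z).prod⁻¹ c = (B.map z).prod⁻¹ ((z ℓ)⁻¹ c) := by
      simp [Perm.mul_apply]
    simp only [hstep, List.length_cons] at hbudget ⊢
    have hNK : (0 : ℝ) < Fintype.card α - K := by
      rw [sub_pos]; exact_mod_cast hK
    by_cases hknown : ∃ a, (ℓ, a, c) ∈ σ
    · obtain ⟨a, ha⟩ := hknown
      have hwalk : ((G ∩ extensions σ).filter fun z => (B.map z).prod⁻¹ ((z ℓ)⁻¹ c) = p) =
          (G ∩ extensions σ).filter fun z => (B.map z).prod⁻¹ a = p := by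
        refine filter_congr fun z hz => ?_
        rw [Perm.inv_eq_iff_eq.2 (mem_extensions.1 (mem_inter.1 hz).2 _ ha).symm]
      rw [hwalk]
      refine (ih σ a (by omega) hout hlast' ?_).trans ?_
      · rintro rfl rfl
        obtain rfl : ℓ = g := hout _ ha rfl
        exact hlast rfl
      · gcongr
        simp
    · push Not at hknown
      refine (card_filter_step_le hG hβ hK (by omega) (fun z => (z ℓ)⁻¹ c) (fun b => (ℓ, b, c))
        (fun b => ?_) (card_filter_inv_apply_eq_mul_le ?_ p) (fun b z => (B.map z).prod⁻¹ b)
        (mul_nonneg (Nat.cast_nonneg _) (div_nonneg hβ hNK.le))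
        fun b hb => ih _ b ?_ ?_ hlast' fun _ => hb).trans (le_of_eq ?_)
      · rw [extensions_insert]
        exact filter_congr fun z _ => by simp [Equiv.eq_symm_apply, eq_comm]
      · rintro ⟨ℓ', a, c'⟩ he rfl rfl
        exact hknown a he
      · have := card_insert_le (ℓ, b, c) σ
        omega
      · simp only [forall_mem_insert]
        exact ⟨fun h => absurd h hb, hout⟩
      · push_cast; ring

-- No prescription enters `p`, so a forward step can reach `p` only as a fresh step.
theorem card_filter_inv_prod_prod_apply_eq_le (hG : CondDensityLE G β K) (hβ : 0 ≤ β)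
    (hK : K < Fintype.card α) {p : α} {g : ι} {B : List ι} (hB : B.getLast? ≠ some g)
    (F : List ι) :
    ∀ (σ : Finset (ι × α × α)) (c : α), #σ + F.length + B.length ≤ K →
      (∀ e ∈ σ, e.2.2 ≠ p) → (∀ e ∈ σ, e.2.1 = p → e.1 = g) → (c = p → F.getLast? = some g) →
      (#((G ∩ extensions σ).filter fun z => (B.map z).prod⁻¹ ((F.map z).prod c) = p) : ℝ) ≤
        (F.length + B.length) * (β / (Fintype.card α - K)) * #(extensions σ) := by
  induction F using List.reverseRecOn with
  | nil =>
    intro σ c hbudget _ hout hc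
    simpa using card_filter_inv_prod_apply_eq_le hG hβ hK B σ c (by simpa using hbudget) hout hB
      fun _ h => by simpa using hc h
  | append_singleton F ℓ ih =>
    intro σ c hbudget hin hout hc
    have hstep : ∀ z : ι → Perm α, ((F ++ [ℓ]).map z).prod c = (F.map z).prod (z ℓ c) := by
      simp [Perm.mul_apply]
    simp only [hstep, List.length_append, List.length_singleton] at hbudget ⊢
    have hNK : (0 : ℝ) < Fintype.card α - K := by
      rw [sub_pos]; exact_mod_cast hK
    by_cases hknown : ∃ b, (ℓ, c, b) ∈ σ
    · obtain ⟨b, hb⟩ := hknown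
      have hwalk : ((G ∩ extensions σ).filter fun z =>
            (B.map z).prod⁻¹ ((F.map z).prod (z ℓ c)) = p) =
          (G ∩ extensions σ).filter fun z => (B.map z).prod⁻¹ ((F.map z).prod b) = p := by
        refine filter_congr fun z hz => ?_
        rw [mem_extensions.1 (mem_inter.1 hz).2 _ hb]
      rw [hwalk]
      refine (ih σ b (by omega) hin hout fun h => absurd h (hin _ hb)).trans ?_
      gcongr
      simp
    · push Not at hknown
      refine (card_filter_step_le hG hβ hK (by omega) (fun z => z ℓ c) (fun b => (ℓ, c, b))
        (fun b => extensions_insert _ σ) (card_filter_apply_eq_mul_le ?_ p)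
        (fun b z => (B.map z).prod⁻¹ ((F.map z).prod b))
        (mul_nonneg (by positivity) (div_nonneg hβ hNK.le))
        fun b hb => ih _ b ?_ ?_ ?_ fun h => absurd h hb).trans (le_of_eq ?_)
      · rintro ⟨ℓ', c', b⟩ he rfl rfl
        exact hknown b he
      · have := card_insert_le (ℓ, c, b) σ
        omega
      · simp only [forall_mem_insert]
        exact ⟨hb, hin⟩
      · simp only [forall_mem_insert]
        refine ⟨fun h => ?_, hout⟩
        simpa using hc h
      · push_cast; ring

end Walks

theorem condDensityLE_pow {v v' : List ι} (hvv' : v.getLast? ≠ v'.getLast?)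
    {G : Finset (ι → Perm α)} (hG : ∀ z ∈ G, (v.map z).prod = (v'.map z).prod) {K : ℕ}
    (hK : 2 * K ≤ Fintype.card α) {j : ℕ} (hj : j * (v.length + v'.length) ≤ K) :
    CondDensityLE G (((v.length + v'.length : ℕ) / (Fintype.card α - K) : ℝ) ^ j)
      (K - j * (v.length + v'.length)) := by
  wlog hv : v ≠ [] generalizing v v'
  · have hv' : v' ≠ [] := by rintro rfl; simp_all
    rw [Nat.add_comm v.length] at hj ⊢
    exact this hvv'.symm (fun z hz => (hG z hz).symm) hj hv'
  set L := v.length + v'.length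
  have hL : 1 ≤ L := by have := List.length_pos_iff.2 hv; omega
  induction j with
  | zero =>
    intro σ _
    simpa using card_le_card (inter_subset_right (s₁ := G) (s₂ := extensions σ))
  | succ j ih =>
    intro σ hσ
    rw [Nat.succ_mul] at hj hσ
    have hjL : j * L ≤ K := by omega
    obtain ⟨p, hp⟩ := exists_forall_ne_of_two_mul_card_lt σ (by omega)
    have hNK : (0 : ℝ) < Fintype.card α - K := by
      rw [sub_pos]; exact_mod_cast (show K < Fintype.card α by omega)
    have hreturn : G ∩ extensions σ = (G ∩ extensions σ).filter
        fun z => (v'.map z).prod⁻¹ ((v.map z).prod p) = p :=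
      (filter_true_of_mem fun z hz => by simp [hG z (mem_inter.1 hz).1]).symm
    rw [hreturn]
    refine (card_filter_inv_prod_prod_apply_eq_le (ih hjL) (by positivity) (by omega)
      (g := v.getLast hv) (by rw [List.getLast?_eq_some_getLast hv] at hvv'; exact hvv'.symm) v σ p
      (by omega) (fun e he => (hp e he).2) (fun e he h => absurd h (hp e he).1)
      fun _ => List.getLast?_eq_some_getLast hv).trans ?_
    have hK' : ((K - j * L : ℕ) : ℝ) ≤ K := by exact_mod_cast Nat.sub_le _ _
    calc _ = (L : ℝ) / (Fintype.card α - (K - j * L : ℕ)) *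
          ((L : ℝ) / (Fintype.card α - K)) ^ j * #(extensions σ) := by
          simp only [L, Nat.cast_add]; ring
      _ ≤ (L : ℝ) / (Fintype.card α - K) *
          ((L : ℝ) / (Fintype.card α - K)) ^ j * #(extensions σ) := by
          gcongr
      _ = _ := by ring

theorem card_filter_prod_eq_le {u u' : List ι} (huu' : u ≠ u') {r : ℕ} (hu : u.length < r)
    (hu' : u'.length < r) :
    (#(univ.filter fun z : ι → Perm α => (u.map z).prod = (u'.map z).prod) : ℝ) ≤
      (4 * r / Fintype.card α) ^ (Fintype.card α / (4 * r)) * Fintype.card (ι → Perm α) := by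
  obtain ⟨v, v', w, rfl, rfl, hvv'⟩ := List.exists_append_getLast?_ne huu'
  set N := Fintype.card α
  set m := N / (4 * r)
  set L := v.length + v'.length
  have hL : L ≤ 2 * r := by simp only [List.length_append] at hu hu'; omega
  have hK : 2 * (m * L) ≤ N :=
    calc 2 * (m * L) ≤ m * (4 * r) := by nlinarith
      _ ≤ N := Nat.div_mul_le_self N (4 * r)
  have hG := condDensityLE_pow hvv'
    (G := univ.filter fun z : ι → Perm α => ((v ++ w).map z).prod = ((v' ++ w).map z).prod)
    (fun z hz => by simpa using (mem_filter.1 hz).2) hK le_rfl ∅ (by simp)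
  simp only [inter_univ, extensions_empty, card_univ] at hG
  have hK' : (2 : ℝ) * (m * L : ℕ) ≤ N := by exact_mod_cast hK
  refine hG.trans (mul_le_mul_of_nonneg_right (pow_le_pow_left₀
    (div_nonneg (Nat.cast_nonneg _) (by linarith [Nat.cast_nonneg (α := ℝ) (m * L)])) ?_ _)
    (Nat.cast_nonneg _))
  rcases Nat.eq_zero_or_pos N with hN | hN
  · have hK0 : m * L = 0 := by omega
    simp [show Fintype.card α = 0 from hN, hN, hK0]
  have hL' : (L : ℝ) ≤ 2 * r := by exact_mod_cast hL
  have hN' : (0 : ℝ) < N := by exact_mod_cast hN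
  rw [div_le_div_iff₀ (by linarith) hN']
  nlinarith

theorem card_exists_lift_eq_le (r : ℕ) :
    (Nat.card {z : ι → Perm α // ∃ u u' : FreeMonoid ι, u ≠ u' ∧ u.length < r ∧
        u'.length < r ∧ FreeMonoid.lift z u = FreeMonoid.lift z u'} : ℝ) ≤
      #(List.shortWords ι r) ^ 2 *
        ((4 * r / Fintype.card α) ^ (Fintype.card α / (4 * r)) * Fintype.card (ι → Perm α)) := by
  classical
  rw [Nat.card_eq_fintype_card, Fintype.card_subtype]
  set W := List.shortWords ι r
  have hsub : (univ.filter fun z : ι → Perm α => ∃ u u' : FreeMonoid ι, u ≠ u' ∧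
      u.length < r ∧ u'.length < r ∧ FreeMonoid.lift z u = FreeMonoid.lift z u') ⊆
      W.offDiag.biUnion fun q => univ.filter fun z => (q.1.map z).prod = (q.2.map z).prod := by
    intro z hz
    obtain ⟨u, u', huu', hu, hu', h⟩ := (mem_filter.1 hz).2
    refine mem_biUnion.2 ⟨(u.toList, u'.toList), ?_, ?_⟩
    · exact mem_offDiag.2 ⟨List.mem_shortWords.2 hu, List.mem_shortWords.2 hu',
        FreeMonoid.toList.injective.ne huu'⟩
    · simpa [FreeMonoid.lift_apply] using h
  calc _ ≤ (∑ q ∈ W.offDiag,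
        #(univ.filter fun z : ι → Perm α => (q.1.map z).prod = (q.2.map z).prod) : ℝ) := by
        exact_mod_cast (card_le_card hsub).trans card_biUnion_le
    _ ≤ ∑ q ∈ W.offDiag, (4 * (r : ℝ) / Fintype.card α) ^ (Fintype.card α / (4 * r)) *
        Fintype.card (ι → Perm α) := by
        refine sum_le_sum fun q hq => ?_
        obtain ⟨hq₁, hq₂, hq⟩ := mem_offDiag.1 hq
        exact card_filter_prod_eq_le hq (List.mem_shortWords.1 hq₁) (List.mem_shortWords.1 hq₂)
    _ ≤ _ := by
        rw [sum_const, nsmul_eq_mul, sq]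
        gcongr
        exact_mod_cast (offDiag_card W).trans_le (Nat.sub_le _ _)

end PermTuple

open Nat

theorem distinct_short_words_collision_bound_general (r n : ℕ) :
    (Nat.card {p : Perm (Fin n) × Perm (Fin n) //
          ∃ u u' : FreeMonoid (Fin 2), u ≠ u' ∧ u.length < r ∧ u'.length < r ∧
            FreeMonoid.lift ![p.1, p.2] u = FreeMonoid.lift ![p.1, p.2] u'} : ℝ) /
        ((n ! : ℝ)) ^ 2 ≤
      4 ^ r * ((4 * r : ℝ) / (n : ℝ)) ^ (n / (4 * r)) := by
  have hcount := PermTuple.card_exists_lift_eq_le (ι := Fin 2) (α := Fin n) r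
  rw [← Nat.card_congr ((finTwoArrowEquiv _).symm.subtypeEquiv fun _ => Iff.rfl)] at hcount
  have hwords : (#(List.shortWords (Fin 2) r) : ℝ) ^ 2 ≤ 4 ^ r := by
    have : #(List.shortWords (Fin 2) r) ≤ 2 ^ r :=
      (List.card_shortWords_le r).trans (by simpa using (Nat.geomSum_lt le_rfl (by simp)).le)
    calc (#(List.shortWords (Fin 2) r) : ℝ) ^ 2 ≤ ((2 : ℝ) ^ r) ^ 2 := by
          gcongr; exact_mod_cast this
      _ = 4 ^ r := by rw [← pow_mul, mul_comm, pow_mul]; norm_num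
  rw [div_le_iff₀ (by positivity)]
  refine hcount.trans ?_
  simp only [Fintype.card_fun, Fintype.card_perm, Fintype.card_fin]
  push_cast
  rw [mul_assoc (4 ^ r : ℝ)]
  gcongr

theorem distinct_short_words_collision_bound (r n : ℕ) (hr : 1 ≤ r) (hn : 4 * r ≤ n) :
    (Nat.card {p : Perm (Fin n) × Perm (Fin n) //
          ∃ u u' : FreeMonoid (Fin 2), u ≠ u' ∧ u.length < r ∧ u'.length < r ∧
            FreeMonoid.lift ![p.1, p.2] u = FreeMonoid.lift ![p.1, p.2] u'} : ℝ) /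
        ((n ! : ℝ)) ^ 2 ≤
      4 ^ r * ((4 * r : ℝ) / (n : ℝ)) ^ (n / (4 * r)) :=
  distinct_short_words_collision_bound_general r n
end

section
/- Let G be a finite group and M a subgroup of G. The number of pairs (x,y) ∈ G × G such that x and y both lie in some common conjugate gMg⁻¹ of M is at most |G|·|M|; equivalently, the probability that two independent uniformly random elements of G lie in a common conjugate of M is at most 1/[G : M]. -/
/-!
If `g⁻¹ x g` and `g⁻¹ y g` lie in `M`, the same holds with `g` replaced by any element of the
coset `gM`, in particular by the chosen representative of that coset. Hence every such
pair is `(h a h⁻¹, h b h⁻¹)` with `h` one of the `[G : M]` coset representatives and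
`a, b ∈ M`, which gives at most `[G : M] · |M|² = |G| · |M|` pairs.
-/

namespace Subgroup

variable {G : Type*} [Group G]

theorem inv_mul_mul_mem_of_inv_mul_mem {M : Subgroup G} {g h x : G} (hgh : g⁻¹ * h ∈ M)
    (hx : g⁻¹ * x * g ∈ M) : h⁻¹ * x * h ∈ M := by
  have hconj : h⁻¹ * x * h = (g⁻¹ * h)⁻¹ * (g⁻¹ * x * g) * (g⁻¹ * h) := by group
  rw [hconj]
  exact M.mul_mem (M.mul_mem (M.inv_mem hgh) hx) hgh

theorem card_pairs_mem_common_conj_le [Finite G] (M : Subgroup G) :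
    Nat.card {p : G × G // ∃ g : G, g⁻¹ * p.1 * g ∈ M ∧ g⁻¹ * p.2 * g ∈ M} ≤
      M.index * Nat.card M ^ 2 := by
  let conjByOut :
      (G ⧸ M) × M × M → {p : G × G // ∃ g : G, g⁻¹ * p.1 * g ∈ M ∧ g⁻¹ * p.2 * g ∈ M} :=
    fun t => ⟨(t.1.out * t.2.1 * t.1.out⁻¹, t.1.out * t.2.2 * t.1.out⁻¹), t.1.out,
      by simp [mul_assoc]⟩
  have hsurj : Function.Surjective conjByOut := by
    rintro ⟨⟨x, y⟩, g, hx, hy⟩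
    set h := (g : G ⧸ M).out
    have hgh : g⁻¹ * h ∈ M := QuotientGroup.eq.mp (QuotientGroup.out_eq' (g : G ⧸ M)).symm
    refine ⟨(g, ⟨_, inv_mul_mul_mem_of_inv_mul_mem hgh hx⟩,
      ⟨_, inv_mul_mul_mem_of_inv_mul_mem hgh hy⟩), ?_⟩
    ext <;> simp [conjByOut, h, mul_assoc]
  calc _ ≤ Nat.card ((G ⧸ M) × M × M) := Nat.card_le_card_of_surjective _ hsurj
    _ = M.index * Nat.card M ^ 2 := by simp [Nat.card_prod, Subgroup.index, sq]

end Subgroup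

theorem pairs_in_common_conjugate_bound {G : Type*} [Group G] [Fintype G]
    (M : Subgroup G) :
    Nat.card {p : G × G // ∃ g : G, g⁻¹ * p.1 * g ∈ M ∧ g⁻¹ * p.2 * g ∈ M} ≤
        Nat.card G * Nat.card M ∧
      (Nat.card {p : G × G // ∃ g : G, g⁻¹ * p.1 * g ∈ M ∧ g⁻¹ * p.2 * g ∈ M} : ℝ) /
          (Nat.card G : ℝ) ^ 2 ≤ 1 / (M.index : ℝ) := by
  have hcard : Nat.card {p : G × G // ∃ g : G, g⁻¹ * p.1 * g ∈ M ∧ g⁻¹ * p.2 * g ∈ M} ≤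
      Nat.card G * Nat.card M := by
    calc _ ≤ M.index * Nat.card M ^ 2 := M.card_pairs_mem_common_conj_le
      _ = Nat.card G * Nat.card M := by rw [← M.index_mul_card]; ring
  refine ⟨hcard, ?_⟩
  have hG : (Nat.card G : ℝ) = M.index * Nat.card M := by
    exact_mod_cast M.index_mul_card.symm
  have hindex : (0 : ℝ) < M.index := by
    exact_mod_cast Nat.pos_of_ne_zero M.index_ne_zero_of_finite
  have hM : (0 : ℝ) < Nat.card M := by exact_mod_cast Nat.card_pos
  calc _ ≤ (Nat.card G * Nat.card M : ℝ) / (Nat.card G : ℝ) ^ 2 := by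
        gcongr; exact_mod_cast hcard
    _ = 1 / M.index := by rw [hG]; field_simp
end

section
/- Let u and v be distinct positive words in two letters, let ℓ = ℓ(u) + ℓ(v) be the sum of their lengths, and let n > ℓ. Fix a point ω ∈ {1,…,n}. If x and y are independent uniformly random elements of the symmetric group S_n, then the probability that the permutation u(x,y)·v(x,y)⁻¹ fixes ω is at most ℓ/(n − ℓ). -/
/-!
Walk along `u` from `ω`, applying `(x a)⁻¹` for each letter `a`, then along `v` from `ω` again; the
event is that both walks end at the same point. A step is *fresh* if the pair (letter, point) it
evaluates has not been evaluated before; after cancelling a common prefix of `u` and `v`, on the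
event some step `k < ℓ` is fresh and its answer is determined by the earlier answers: either the
first return of the `u`-walk to `ω`, or the last fresh step of the `v`-walk, after which the walk
only retraces known edges and must land on the endpoint of the `u`-walk. Composing the generator
used at step `k` with a transposition moves that answer to any of the at least `n - k` points not
answered before, without changing earlier answers; this gives at least `n - k` distinct tuples per
tuple of the event for step `k`, hence probability at most `1 / (n - k)`. Summing over `k < ℓ`
gives `ℓ / (n + 1 - ℓ)`.
-/

open Equiv Nat Finset

namespace WordWalk

variable {α X : Type*}

def walk (x : α → Perm X) (ω : X) (l : List α) : X :=
  l.foldl (fun p a => (x a)⁻¹ p) ω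

section Walk

variable (x : α → Perm X) (ω : X)

@[simp] lemma walk_nil : walk x ω [] = ω := rfl

@[simp] lemma walk_cons (a : α) (l : List α) : walk x ω (a :: l) = walk x ((x a)⁻¹ ω) l := rfl

lemma walk_concat (l : List α) (a : α) : walk x ω (l ++ [a]) = (x a)⁻¹ (walk x ω l) :=
  List.foldl_concat _ _ _ _

lemma walk_take_succ {l : List α} {k : ℕ} (hk : k < l.length) :
    walk x ω (l.take (k + 1)) = (x l[k])⁻¹ (walk x ω (l.take k)) := by
  rw [List.take_succ_eq_append_getElem hk, walk_concat]

lemma walk_eq_lift (l : List α) :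
    walk x ω l = (FreeMonoid.lift x (FreeMonoid.ofList l))⁻¹ ω := by
  induction l generalizing ω with
  | nil => simp
  | cons a l ih => simp [ih, FreeMonoid.ofList_cons, Perm.mul_apply]

lemma walk_conj (c : Perm X) (l : List α) :
    walk (fun a => c * x a * c⁻¹) (c ω) l = c (walk x ω l) := by
  induction l generalizing ω with
  | nil => rfl
  | cons a l ih => simp [ih, Perm.mul_apply]

lemma lift_mul_inv_apply_eq_self_iff (u v : FreeMonoid α) :
    (FreeMonoid.lift x u * (FreeMonoid.lift x v)⁻¹) ω = ω ↔
      walk x ω u.toList = walk x ω v.toList := by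
  rw [walk_eq_lift, walk_eq_lift, FreeMonoid.ofList_toList, FreeMonoid.ofList_toList,
    Perm.mul_apply, ← Perm.eq_inv_iff_eq, eq_comm]

end Walk

section Steps

variable [Inhabited α] (x : α → Perm X) (ω : X) (u v : List α)

def letter (k : ℕ) : α := (u ++ v).getD k default

/-- The point evaluated at step `k`: steps `0, …, |u| - 1` walk along `u` from `ω`, and the walk
restarts at `ω` at step `|u|` to follow `v`. -/
def query : ℕ → X
  | 0 => ω
  | k + 1 => if k + 1 = u.length then ω else (x (letter u v k))⁻¹ (query k)

def answer (k : ℕ) : X := (x (letter u v k))⁻¹ (query x ω u v k)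

def IsFresh (k : ℕ) : Prop :=
  ∀ j < k, letter u v j = letter u v k → query x ω u v j ≠ query x ω u v k

lemma letter_of_lt {k : ℕ} (hk : k < u.length) : letter u v k = u[k] := by
  rw [letter, List.getD_append _ _ _ _ hk, List.getD_eq_getElem]

lemma letter_length_add {j : ℕ} (hj : j < v.length) : letter u v (u.length + j) = v[j] := by
  rw [letter, List.getD_append_right _ _ _ _ (by omega), Nat.add_sub_cancel_left,
    List.getD_eq_getElem]

lemma query_succ {k : ℕ} (hk : k + 1 ≠ u.length) :
    query x ω u v (k + 1) = answer x ω u v k := by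
  rw [query, if_neg hk, answer]

lemma query_length : query x ω u v u.length = ω := by
  cases h : u.length with
  | zero => rfl
  | succ k => simp [query, h]

lemma answer_eq_walk_take {k : ℕ} (hk : k < u.length) :
    answer x ω u v k = walk x ω (u.take (k + 1)) := by
  induction k with
  | zero => rw [walk_take_succ x ω hk, answer, letter_of_lt u v hk]; rfl
  | succ k ih =>
    rw [walk_take_succ x ω hk, ← ih (by omega), ← query_succ x ω u v (k := k) (by omega),
      answer, letter_of_lt u v hk]

lemma query_length_add {j : ℕ} (hj : j ≤ v.length) :
    query x ω u v (u.length + j) = walk x ω (v.take j) := by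
  induction j with
  | zero => simp [query_length]
  | succ j ih =>
    rw [← add_assoc, query_succ x ω u v (by omega), answer, ih (by omega),
      letter_length_add u v (by omega), walk_take_succ x ω (by omega)]

lemma answer_eq_answer_iff {i j : ℕ} (hl : letter u v i = letter u v j) :
    answer x ω u v i = answer x ω u v j ↔ query x ω u v i = query x ω u v j := by
  rw [answer, answer, hl, (x _)⁻¹.injective.eq_iff]

lemma query_eq_of_forall_lt_answer_eq {y : α → Perm X} {k : ℕ}
    (h : ∀ i < k, answer x ω u v i = answer y ω u v i) : query x ω u v k = query y ω u v k := by
  cases k with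
  | zero => rfl
  | succ k =>
    by_cases hk : k + 1 = u.length
    · simp [query, hk]
    · rw [query_succ x ω u v hk, query_succ y ω u v hk, h k k.lt_succ_self]

lemma answer_eq_walk {k : ℕ} (hk : k + 1 = u.length) : answer x ω u v k = walk x ω u := by
  rw [answer_eq_walk_take x ω u v (by omega), hk, List.take_length]

lemma walk_eq_of_forall_lt_answer_eq {y : α → Perm X}
    (h : ∀ i < u.length, answer x ω u v i = answer y ω u v i) : walk x ω u = walk y ω u := by
  cases hu : u.length with
  | zero => rw [List.length_eq_zero_iff.1 hu, walk_nil, walk_nil]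
  | succ k =>
    rw [← answer_eq_walk x ω u v hu.symm, ← answer_eq_walk y ω u v hu.symm, h k (by omega)]

lemma exists_isFresh_of_not_isFresh {k : ℕ} (hk : ¬IsFresh x ω u v k) :
    ∃ i < k, IsFresh x ω u v i ∧ letter u v i = letter u v k ∧
      query x ω u v i = query x ω u v k := by
  induction k using Nat.strong_induction_on with
  | _ k ih =>
    simp only [IsFresh, not_forall, not_not] at hk
    obtain ⟨j, hjk, hl, hq⟩ := hk
    by_cases hj : IsFresh x ω u v j
    · exact ⟨j, hjk, hj, hl, hq⟩
    · obtain ⟨i, hij, hi, hl', hq'⟩ := ih j hjk hj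
      exact ⟨i, hij.trans hjk, hi, hl'.trans hl, hq'.trans hq⟩

end Steps

section Decisive

variable [Inhabited α] {x y : α → Perm X} {ω : X} {u v : List α}

lemma query_eq_of_query_eq_earlier {i j k : ℕ} (hik : i < k)
    (h : ∀ l < k, answer x ω u v l = answer y ω u v l) (hl : letter u v i = letter u v j)
    (hq : query x ω u v i = query x ω u v j) (ha : answer x ω u v j = answer y ω u v j) :
    query x ω u v j = query y ω u v j := by
  have hy : answer y ω u v i = answer y ω u v j :=
    (h i hik).symm.trans (((answer_eq_answer_iff x ω u v hl).2 hq).trans ha)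
  rw [← hq, query_eq_of_forall_lt_answer_eq x ω u v fun l hl => h l (hl.trans hik),
    (answer_eq_answer_iff y ω u v hl).1 hy]

/-- After the last fresh step `k` of the `v`-walk every step retraces an edge revealed at a step
`≤ k`, so two tuples with the same answers before `k` but different answers at `k` stay apart
until the end of the walk, where the coincidence event pins both to the same endpoint of `u`. -/
lemma answer_eq_of_forall_not_isFresh {k : ℕ} (hk : u.length ≤ k)
    (hkm : k < u.length + v.length)
    (hx : ∀ j, k < j → j < u.length + v.length → ¬IsFresh x ω u v j)
    (hy : ∀ j, k < j → j < u.length + v.length → ¬IsFresh y ω u v j)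
    (hxE : walk x ω u = walk x ω v) (hyE : walk y ω u = walk y ω v)
    (h : ∀ j < k, answer x ω u v j = answer y ω u v j) :
    answer x ω u v k = answer y ω u v k := by
  by_contra hne
  have served : ∀ z : α → Perm X, (∀ j, k < j → j < u.length + v.length → ¬IsFresh z ω u v j) →
      ∀ j, k < j → j < u.length + v.length →
        ∃ i ≤ k, letter u v i = letter u v j ∧ query z ω u v i = query z ω u v j := by
    intro z hz j hkj hjm
    obtain ⟨i, hij, hi, hl, hq⟩ := exists_isFresh_of_not_isFresh z ω u v (hz j hkj hjm)
    exact ⟨i, not_lt.1 fun hki => hz i hki (by omega) hi, hl, hq⟩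
  have step : ∀ j, k < j → j < u.length + v.length →
      query x ω u v j ≠ query y ω u v j → answer x ω u v j ≠ answer y ω u v j := by
    intro j hkj hjm hqj haj
    obtain ⟨i, hik, hli, hqi⟩ := served x hx j hkj hjm
    obtain ⟨i', hik', hli', hqi'⟩ := served y hy j hkj hjm
    rcases hik.lt_or_eq with hik | rfl
    · exact hqj (query_eq_of_query_eq_earlier hik h hli hqi haj)
    rcases hik'.lt_or_eq with hik' | rfl
    · exact hqj (query_eq_of_query_eq_earlier hik' (fun l hl => (h l hl).symm) hli' hqi'
        haj.symm).symm
    · exact hqj (hqi.symm.trans ((query_eq_of_forall_lt_answer_eq x ω u v h).trans hqi'))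
  have apart : ∀ r, k + r < u.length + v.length →
      answer x ω u v (k + r) ≠ answer y ω u v (k + r) := by
    intro r
    induction r with
    | zero => exact fun _ => hne
    | succ r ih =>
      intro hr
      refine step _ (by omega) hr ?_
      rw [← add_assoc, query_succ x ω u v (by omega), query_succ y ω u v (by omega)]
      exact ih (by omega)
  refine apart (u.length + v.length - 1 - k) (by omega) ?_
  have hend : ∀ z : α → Perm X, answer z ω u v (k + (u.length + v.length - 1 - k)) =
      walk z ω v := fun z => by
    rw [← query_succ z ω u v (by omega), show k + (u.length + v.length - 1 - k) + 1 =
      u.length + v.length by omega, query_length_add z ω u v le_rfl, List.take_length]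
  rw [hend, hend, ← hxE, ← hyE]
  exact walk_eq_of_forall_lt_answer_eq x ω u v fun j hj => h j (by omega)

variable (x ω u v) in
/-- Step `k` is fresh and, on the coincidence event, its answer is a function of the earlier
answers: it is either the first return of the `u`-walk to `ω`, or the last fresh step of the
`v`-walk. -/
def IsDecisive (k : ℕ) : Prop :=
  IsFresh x ω u v k ∧
    if k < u.length then answer x ω u v k = ω
    else ∀ j, k < j → j < u.length + v.length → ¬IsFresh x ω u v j

lemma answer_eq_of_isDecisive {k : ℕ} (hkm : k < u.length + v.length)
    (hx : IsDecisive x ω u v k) (hy : IsDecisive y ω u v k)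
    (hxE : walk x ω u = walk x ω v) (hyE : walk y ω u = walk y ω v)
    (h : ∀ j < k, answer x ω u v j = answer y ω u v j) :
    answer x ω u v k = answer y ω u v k := by
  by_cases hk : k < u.length
  · rw [IsDecisive, if_pos hk] at hx hy
    exact hx.2.trans hy.2.symm
  · rw [IsDecisive, if_neg hk] at hx hy
    exact answer_eq_of_forall_not_isFresh (not_lt.1 hk) hkm hx.2 hy.2 hxE hyE h

lemma exists_lt_answer_eq_of_forall_not_isFresh (hhead : u.head? ≠ v.head?)
    (hE : walk x ω u = walk x ω v)
    (hv : ∀ k, u.length ≤ k → k < u.length + v.length → ¬IsFresh x ω u v k) :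
    ∃ j < u.length, answer x ω u v j = ω := by
  rcases v with _ | ⟨b, v⟩
  · have hu : u ≠ [] := by simpa using hhead
    have hlen := List.length_pos_iff.2 hu
    exact ⟨u.length - 1, by omega, by rw [answer_eq_walk x ω u [] (by omega), hE, walk_nil]⟩
  · have hfresh := hv u.length le_rfl (by simp)
    simp only [IsFresh, not_forall, not_not] at hfresh
    obtain ⟨j, hj, hl, hq⟩ := hfresh
    cases j with
    | zero =>
      rw [letter_of_lt u _ hj, ← add_zero u.length, letter_length_add u _ (by simp)] at hl
      exact (hhead (by rw [List.head?_eq_getElem?, List.getElem?_eq_getElem hj, hl]; rfl)).elim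
    | succ i =>
      exact ⟨i, by omega, by rw [← query_succ x ω u _ (by omega), hq, query_length]⟩

lemma exists_isDecisive (hhead : u.head? ≠ v.head?) (hE : walk x ω u = walk x ω v) :
    ∃ k < u.length + v.length, IsDecisive x ω u v k := by
  classical
  by_cases hv : ∃ k, u.length ≤ k ∧ k < u.length + v.length ∧ IsFresh x ω u v k
  · obtain ⟨k₀, hk₀, hk₀m, hk₀f⟩ := hv
    set P := fun k => u.length ≤ k ∧ IsFresh x ω u v k
    have hP : P k₀ := ⟨hk₀, hk₀f⟩
    set k := Nat.findGreatest P (u.length + v.length - 1)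
    obtain ⟨hk, hkf⟩ : P k := Nat.findGreatest_spec (by omega) hP
    have hkm : k < u.length + v.length := by
      have := Nat.findGreatest_le (P := P) (u.length + v.length - 1)
      omega
    refine ⟨k, hkm, hkf, ?_⟩
    rw [if_neg (not_lt.2 hk)]
    intro j hkj hjm hj
    have := Nat.le_findGreatest (P := P) (by omega : j ≤ u.length + v.length - 1) ⟨by omega, hj⟩
    omega
  · push Not at hv
    have hret := exists_lt_answer_eq_of_forall_not_isFresh hhead hE hv
    set r := Nat.find hret
    obtain ⟨hr, hrω⟩ : r < u.length ∧ answer x ω u v r = ω := Nat.find_spec hret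
    refine ⟨r, by omega, fun i hir hl hq => ?_, by rwa [if_pos hr]⟩
    have hiω : answer x ω u v i = ω := ((answer_eq_answer_iff x ω u v hl).2 hq).trans hrω
    exact Nat.find_min hret hir ⟨hir.trans hr, hiω⟩

end Decisive

section Reroute

variable [DecidableEq α]

def reroute (x : α → Perm X) (a : α) (σ : Perm X) : α → Perm X :=
  Function.update x a (x a * σ)

lemma reroute_injective (a : α) (σ : Perm X) : Function.Injective (reroute · a σ) := by
  intro x y h
  funext b
  have hb := congrFun h b
  by_cases hab : b = a
  · subst hab
    simpa [reroute] using hb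
  · simpa [reroute, Function.update_of_ne hab] using hb

variable [Inhabited α] [DecidableEq X] {x : α → Perm X} {ω : X} {u v : List α} {k : ℕ} {c : X}

lemma answer_reroute_of_lt (hfresh : IsFresh x ω u v k) (hc : ∀ j < k, answer x ω u v j ≠ c) :
    ∀ j < k, answer (reroute x (letter u v k) (swap (answer x ω u v k) c)) ω u v j =
      answer x ω u v j := by
  intro j
  induction j using Nat.strong_induction_on with
  | _ j ih =>
    intro hjk
    have hq := query_eq_of_forall_lt_answer_eq _ ω u v fun i hi => ih i hi (hi.trans hjk)
    by_cases hl : letter u v j = letter u v k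
    · have hne : answer x ω u v j ≠ answer x ω u v k :=
        fun h => hfresh j hjk hl ((answer_eq_answer_iff x ω u v hl).1 h)
      rw [answer, hq, hl, reroute, Function.update_self, mul_inv_rev, swap_inv, Perm.mul_apply,
        ← hl]
      exact swap_apply_of_ne_of_ne hne (hc j hjk)
    · rw [answer, hq, reroute, Function.update_of_ne hl, answer]

lemma answer_reroute_self (hfresh : IsFresh x ω u v k) (hc : ∀ j < k, answer x ω u v j ≠ c) :
    answer (reroute x (letter u v k) (swap (answer x ω u v k) c)) ω u v k = c := by
  have hq := query_eq_of_forall_lt_answer_eq _ ω u v (answer_reroute_of_lt hfresh hc)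
  rw [answer, hq, reroute, Function.update_self, mul_inv_rev, swap_inv, Perm.mul_apply]
  exact swap_apply_left _ _

end Reroute

section Counting

variable [Fintype α] [DecidableEq α] [Fintype X] [DecidableEq X]

def coincidences (ω : X) (u v : List α) : Finset (α → Perm X) :=
  {x | walk x ω u = walk x ω v}

@[simp] lemma mem_coincidences {ω : X} {u v : List α} {x : α → Perm X} :
    x ∈ coincidences ω u v ↔ walk x ω u = walk x ω v := by
  simp [coincidences]

lemma card_coincidences_eq (u v : List α) (ω₁ ω₂ : X) :
    #(coincidences ω₁ u v) = #(coincidences ω₂ u v) := by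
  set c := swap ω₁ ω₂
  refine card_equiv (piCongrRight fun _ => (MulAut.conj c).toEquiv) fun x => ?_
  have hconj : ∀ l, walk (piCongrRight (fun _ => (MulAut.conj c).toEquiv) x) ω₂ l =
      c (walk x ω₁ l) := fun l => by
    rw [← swap_apply_left ω₁ ω₂, ← walk_conj]
    rfl
  simp only [mem_coincidences, hconj, c.injective.eq_iff]

/-- Averaged over the base point, the first letter of a common prefix only relabels it. -/
lemma sum_card_coincidences_cons (u v : List α) (a : α) :
    ∑ ω : X, #(coincidences ω (a :: u) (a :: v)) = ∑ ω : X, #(coincidences ω u v) := by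
  simp only [coincidences, card_filter]
  rw [sum_comm, sum_comm (γ := X)]
  refine sum_congr rfl fun x _ => ?_
  exact Equiv.sum_comp (x a)⁻¹ fun ω => if walk x ω u = walk x ω v then 1 else 0

lemma card_coincidences_cons (ω : X) (u v : List α) (a : α) :
    #(coincidences ω (a :: u) (a :: v)) = #(coincidences ω u v) := by
  have hsum := sum_card_coincidences_cons (X := X) u v a
  rw [sum_congr rfl fun ω' _ => card_coincidences_eq (a :: u) (a :: v) ω' ω,
    sum_congr rfl fun ω' _ => card_coincidences_eq u v ω' ω, sum_const, sum_const] at hsum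
  exact Nat.eq_of_mul_eq_mul_left (Fintype.card_pos_iff.2 ⟨ω⟩) hsum

variable [Inhabited α]

theorem card_sub_mul_card_le (ω : X) (u v : List α) (k : ℕ) (S : Finset (α → Perm X))
    (hfresh : ∀ x ∈ S, IsFresh x ω u v k)
    (hdet : ∀ x ∈ S, ∀ y ∈ S, (∀ j < k, answer x ω u v j = answer y ω u v j) →
      answer x ω u v k = answer y ω u v k) :
    (Fintype.card X - k) * #S ≤ Fintype.card (α → Perm X) := by
  set avail : (α → Perm X) → Finset X := fun x => ((range k).image (answer x ω u v))ᶜ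
  have havail : ∀ x, ∀ c ∈ avail x, ∀ j < k, answer x ω u v j ≠ c := fun x c hc j hj h =>
    (mem_compl.1 hc) (mem_image.2 ⟨j, mem_range.2 hj, h⟩)
  set F : (Σ _ : α → Perm X, X) → α → Perm X := fun p =>
    reroute p.1 (letter u v k) (swap (answer p.1 ω u v k) p.2)
  have hF : Set.InjOn F (S.sigma avail) := by
    rintro ⟨x, c⟩ hxc ⟨y, d⟩ hyd hF
    simp only [coe_sigma, Set.mem_sigma_iff, mem_coe] at hxc hyd
    have hcx := havail x c hxc.2
    have hdy := havail y d hyd.2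
    have hcd : c = d := by
      rw [← answer_reroute_self (hfresh x hxc.1) hcx, ← answer_reroute_self (hfresh y hyd.1) hdy]
      exact congrArg (answer · ω u v k) hF
    have hagree : ∀ j < k, answer x ω u v j = answer y ω u v j := fun j hj => by
      rw [← answer_reroute_of_lt (hfresh x hxc.1) hcx j hj,
        ← answer_reroute_of_lt (hfresh y hyd.1) hdy j hj]
      exact congrArg (answer · ω u v j) hF
    have hxy : x = y := by
      refine reroute_injective (letter u v k) (swap (answer x ω u v k) c) ?_
      simpa [F, hdet x hxc.1 y hyd.1 hagree, hcd] using hF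
    subst hxy hcd
    rfl
  calc (Fintype.card X - k) * #S = ∑ _x ∈ S, (Fintype.card X - k) := by
        rw [sum_const, smul_eq_mul, mul_comm]
    _ ≤ ∑ x ∈ S, #(avail x) := sum_le_sum fun x _ => by
        rw [card_compl]
        have : #((range k).image (answer x ω u v)) ≤ k := card_image_le.trans (card_range k).le
        omega
    _ = #(S.sigma avail) := (card_sigma _ _).symm
    _ ≤ #(univ : Finset (α → Perm X)) :=
        card_le_card_of_injOn F (fun _ _ => mem_coe.2 (mem_univ _)) hF
    _ = Fintype.card (α → Perm X) := card_univ

theorem card_coincidences_le_of_head?_ne (ω : X) {u v : List α} (hhead : u.head? ≠ v.head?) :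
    (Fintype.card X + 1 - (u.length + v.length)) * #(coincidences ω u v) ≤
      (u.length + v.length) * Fintype.card (α → Perm X) := by
  classical
  set m := u.length + v.length
  set S : ℕ → Finset (α → Perm X) := fun k => {x ∈ coincidences ω u v | IsDecisive x ω u v k}
  have hcover : coincidences ω u v ⊆ (range m).biUnion S := fun x hx => by
    obtain ⟨k, hkm, hk⟩ := exists_isDecisive hhead (mem_coincidences.1 hx)
    exact mem_biUnion.2 ⟨k, mem_range.2 hkm, mem_filter.2 ⟨hx, hk⟩⟩
  have hS : ∀ k < m, (Fintype.card X - k) * #(S k) ≤ Fintype.card (α → Perm X) := fun k hkm =>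
    card_sub_mul_card_le ω u v k (S k) (fun x hx => (mem_filter.1 hx).2.1)
      fun x hx y hy => answer_eq_of_isDecisive hkm (mem_filter.1 hx).2 (mem_filter.1 hy).2
        (mem_coincidences.1 (mem_filter.1 hx).1) (mem_coincidences.1 (mem_filter.1 hy).1)
  calc (Fintype.card X + 1 - m) * #(coincidences ω u v)
      ≤ (Fintype.card X + 1 - m) * ∑ k ∈ range m, #(S k) :=
        Nat.mul_le_mul_left _ ((card_le_card hcover).trans card_biUnion_le)
    _ = ∑ k ∈ range m, (Fintype.card X + 1 - m) * #(S k) := mul_sum _ _ _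
    _ ≤ ∑ _k ∈ range m, Fintype.card (α → Perm X) := sum_le_sum fun k hk =>
        (Nat.mul_le_mul_right _ (by have := mem_range.1 hk; omega)).trans
          (hS k (mem_range.1 hk))
    _ = m * Fintype.card (α → Perm X) := by rw [sum_const, card_range, smul_eq_mul]

theorem card_coincidences_le (ω : X) {u v : List α} (huv : u ≠ v) :
    (Fintype.card X + 1 - (u.length + v.length)) * #(coincidences ω u v) ≤
      (u.length + v.length) * Fintype.card (α → Perm X) := by
  induction u generalizing v with
  | nil =>
    refine card_coincidences_le_of_head?_ne ω ?_
    cases v <;> simp_all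
  | cons a u ih =>
    rcases v with _ | ⟨b, v⟩
    · exact card_coincidences_le_of_head?_ne ω (by simp)
    by_cases hab : a = b
    · subst hab
      have := ih (v := v) (by simpa using huv)
      rw [card_coincidences_cons, List.length_cons, List.length_cons]
      refine le_trans (Nat.mul_le_mul_right _ (by omega)) (this.trans (Nat.mul_le_mul_right _ ?_))
      omega
    · exact card_coincidences_le_of_head?_ne ω (by simpa using hab)

end Counting

end WordWalk

open WordWalk in
theorem fixed_point_probability_bound (u v : FreeMonoid (Fin 2)) (huv : u ≠ v)
    (n : ℕ) (hn : u.length + v.length < n) (ω : Fin n) :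
    (Nat.card {p : Perm (Fin n) × Perm (Fin n) //
          (FreeMonoid.lift ![p.1, p.2] u * (FreeMonoid.lift ![p.1, p.2] v)⁻¹) ω = ω} : ℝ) /
        ((n ! : ℝ)) ^ 2 ≤
      ((u.length + v.length : ℕ) : ℝ) / ((n : ℝ) - ((u.length + v.length : ℕ) : ℝ)) := by
  set ℓ := u.length + v.length
  have hcount : Nat.card {p : Perm (Fin n) × Perm (Fin n) //
      (FreeMonoid.lift ![p.1, p.2] u * (FreeMonoid.lift ![p.1, p.2] v)⁻¹) ω = ω} =
      #(coincidences ω u.toList v.toList) := by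
    rw [← Fintype.card_coe, ← Nat.card_eq_fintype_card]
    exact Nat.card_congr <| (finTwoArrowEquiv _).symm.subtypeEquiv fun p => by
      rw [mem_coincidences, ← lift_mul_inv_apply_eq_self_iff]
      rfl
  set C := #(coincidences ω u.toList v.toList)
  have hbound : ((n + 1 - ℓ : ℕ) : ℝ) * C ≤ ℓ * (n ! : ℝ) ^ 2 := by
    have := card_coincidences_le ω (FreeMonoid.toList.injective.ne huv)
    simp only [Fintype.card_fin, Fintype.card_pi, Fintype.card_perm, prod_const] at this
    exact_mod_cast this
  rw [Nat.cast_sub hn.le.step, Nat.cast_add_one] at hbound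
  have hℓ : (ℓ : ℝ) < n := by exact_mod_cast hn
  rw [hcount, div_le_div_iff₀ (by positivity) (by linarith)]
  nlinarith [C.cast_nonneg (α := ℝ)]
end
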